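/- arXiv:2105.10695 — 5 statements merged into one kernel-verified Lean document; each statement's English description precedes it below -/
import Mathlib

section
/- Let G(x₁,…,xₙ) be a smooth real-valued function on (0,∞)ⁿ such that G(|z₁|²,…,|zₙ|²) = Φ(z) + conj(Φ(z)) for some holomorphic function Φ on an open subset of ℂⁿ. Then there exist real constants c₁,…,cₙ and d such that G(x₁,…,xₙ) = Σⱼ cⱼ log xⱼ + d. -/
open scoped BigOperators

open Complex Filter Metric

set_option maxHeartbeats 1000000


/-- A function that is locally constant on a preconnected set takes equal values there. -/
lemma aux_locally_const_eq {X : Type*} [TopologicalSpace X] {α : Type*} {U : Set X}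
    (hUconn : IsPreconnected U) {f : X → α}
    (h : ∀ z ∈ U, ∀ᶠ w in nhds z, f w = f z) {x y : X} (hx : x ∈ U) (hy : y ∈ U) :
    f x = f y := by
  haveI : PreconnectedSpace U := Subtype.preconnectedSpace hUconn
  have hlc : IsLocallyConstant (fun w : U => f ↑w) := by
    rw [IsLocallyConstant.iff_eventually_eq]
    rintro ⟨z, hz⟩
    exact (continuous_subtype_val.continuousAt (x := ⟨z, hz⟩)).eventually (h z hz)
  exact hlc.apply_eq_of_isPreconnected isPreconnected_univ
    (x := ⟨x, hx⟩) (y := ⟨y, hy⟩) trivial trivial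

/-- Zero derivative on an open preconnected set gives equal values. -/
lemma aux_const_of_deriv_zero {E F : Type*} [NormedAddCommGroup E] [NormedSpace ℝ E]
    [NormedAddCommGroup F] [NormedSpace ℝ F] {U : Set E}
    (hUopen : IsOpen U) (hUconn : IsPreconnected U) {f : E → F}
    (hf : ∀ z ∈ U, HasFDerivAt f (0 : E →L[ℝ] F) z) {x y : E} (hx : x ∈ U) (hy : y ∈ U) :
    f x = f y := by
  refine aux_locally_const_eq hUconn (fun z hz => ?_) hx hy
  obtain ⟨ε, hε, hball⟩ := Metric.isOpen_iff.1 hUopen z hz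
  filter_upwards [Metric.ball_mem_nhds z hε] with w hw
  refine (convex_ball z ε).is_const_of_fderivWithin_eq_zero (𝕜 := ℝ)
    (fun u hu => ((hf u (hball hu)).differentiableAt).differentiableWithinAt)
    (fun u hu => ?_) hw (Metric.mem_ball_self hε)
  rw [fderivWithin_of_isOpen Metric.isOpen_ball hu]
  exact (hf u (hball hu)).fderiv

/-- A holomorphic function with constant real part has zero (real) derivative. -/
lemma aux_deriv_zero_of_re_const {E : Type*} [NormedAddCommGroup E] [NormedSpace ℂ E]
    {U : Set E} (hUopen : IsOpen U) {f : E → ℂ} (r : ℝ)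
    (hf : ∀ z ∈ U, DifferentiableAt ℂ f z) (hre : ∀ z ∈ U, (f z).re = r) :
    ∀ z ∈ U, HasFDerivAt f (0 : E →L[ℝ] ℂ) z := by
  intro z hz
  set D := fderiv ℂ f z with hD
  have hfd : HasFDerivAt f D z := (hf z hz).hasFDerivAt
  have key : ∀ v : E, (D v).re = 0 := by
    intro v
    have hline : HasDerivAt (fun t : ℝ => z + t • v) v 0 := by
      simpa using (((hasDerivAt_id (0:ℝ)).smul_const v).const_add z)
    have hfd' : HasFDerivAt f (D.restrictScalars ℝ) (z + (0:ℝ) • v) := by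
      simpa using hfd.restrictScalars ℝ
    have hcomp : HasDerivAt (fun t : ℝ => f (z + t • v)) ((D.restrictScalars ℝ) v) 0 := by
      exact hfd'.comp_hasDerivAt 0 hline
    have hre' : HasDerivAt (fun t : ℝ => (f (z + t • v)).re) (D v).re 0 :=
      (Complex.reCLM.hasFDerivAt.comp_hasDerivAt 0 hcomp)
    have hmem : ∀ᶠ t : ℝ in nhds 0, z + t • v ∈ U := by
      have hc : ContinuousAt (fun t : ℝ => z + t • v) 0 := hline.continuousAt
      exact hc.eventually_mem (by simpa using hUopen.mem_nhds hz)
    have hev : (fun t : ℝ => (f (z + t • v)).re) =ᶠ[nhds (0:ℝ)] fun _ => r := by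
      filter_upwards [hmem] with t ht using hre _ ht
    have hzero : HasDerivAt (fun t : ℝ => (f (z + t • v)).re) 0 0 :=
      (hasDerivAt_const (0:ℝ) r).congr_of_eventuallyEq hev
    exact hre'.unique hzero
  have hDv : ∀ v : E, D v = 0 := by
    intro v
    have h1 : (D v).re = 0 := key v
    have h2 : (D (Complex.I • v)).re = 0 := key _
    rw [D.map_smul, smul_eq_mul, Complex.mul_re, Complex.I_re, Complex.I_im] at h2
    apply Complex.ext
    · simpa using h1
    · simpa [h1] using h2.symm
  have hD0 : D = 0 := ContinuousLinearMap.ext fun v => hDv v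
  have h := hfd.restrictScalars ℝ
  rw [hD0] at h
  simpa using h

lemma aux_single_smul {n : ℕ} (j : Fin n) (a : ℂ) :
    Pi.single j a = a • (Pi.single j (1:ℂ) : Fin n → ℂ) := by
  ext k
  by_cases h : k = j <;> simp [Pi.single_apply, h]

lemma aux_curve0 {n : ℕ} (j : Fin n) (z : Fin n → ℂ) :
    Function.update z j (Complex.exp ((0:ℝ) * Complex.I) * z j) = z := by
  simp

lemma aux_curve_deriv {n : ℕ} (j : Fin n) (z : Fin n → ℂ) :
    HasDerivAt (fun t : ℝ => Function.update z j (Complex.exp (t * Complex.I) * z j))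
      (Pi.single j (Complex.I * z j)) 0 := by
  rw [hasDerivAt_pi]
  intro k
  have hco : ∀ t : ℝ, Function.update z j (Complex.exp (t * Complex.I) * z j) k
      = if k = j then Complex.exp (t * Complex.I) * z j else z k := by
    intro t; rw [Function.update_apply]
  simp only [hco]
  by_cases h : k = j
  · subst h
    simp only [if_pos rfl, Pi.single_eq_same]
    have h1 : HasDerivAt (fun t : ℝ => (t : ℂ)) 1 0 := by
      exact (Complex.ofRealCLM.hasDerivAt (x := (0:ℝ))).congr_deriv (by simp)
    have h2 := (h1.mul_const Complex.I).cexp.mul_const (z k)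
    simpa using h2
  · simp only [if_neg h, Pi.single_eq_of_ne h]
    exact hasDerivAt_const _ _

lemma aux_phi_deriv {n : ℕ} {Φ : (Fin n → ℂ) → ℂ} {U : Set (Fin n → ℂ)}
    (hUopen : IsOpen U) (hΦ : DifferentiableOn ℂ Φ U) {z : Fin n → ℂ} (hz : z ∈ U)
    (j : Fin n) :
    HasDerivAt (fun t : ℝ => Φ (Function.update z j (Complex.exp (t * Complex.I) * z j)))
      ((Complex.I * z j) * fderiv ℂ Φ z (Pi.single j 1)) 0 := by
  have hΦz : HasFDerivAt Φ (fderiv ℂ Φ z) z :=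
    (hΦ.differentiableAt (hUopen.mem_nhds hz)).hasFDerivAt
  have hΦz' : HasFDerivAt Φ ((fderiv ℂ Φ z).restrictScalars ℝ)
      (Function.update z j (Complex.exp ((0:ℝ) * Complex.I) * z j)) := by
    rw [aux_curve0]; exact hΦz.restrictScalars ℝ
  have := hΦz'.comp_hasDerivAt 0 (aux_curve_deriv j z)
  have heval : ((fderiv ℂ Φ z).restrictScalars ℝ) (Pi.single j (Complex.I * z j))
      = (Complex.I * z j) * fderiv ℂ Φ z (Pi.single j 1) := by
    rw [aux_single_smul j (Complex.I * z j)]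
    simp [smul_eq_mul]
  rw [heval] at this
  exact this

lemma aux_moduli {n : ℕ} (j : Fin n) (z : Fin n → ℂ) (t : ℝ) :
    (fun k => ‖Function.update z j (Complex.exp (t * Complex.I) * z j) k‖ ^ 2)
      = fun k => ‖z k‖ ^ 2 := by
  funext k
  rw [Function.update_apply]
  by_cases h : k = j
  · subst h
    rw [if_pos rfl, norm_mul]
    have : ‖Complex.exp ((t:ℂ) * Complex.I)‖ = 1 := by
      rw [Complex.norm_exp]
      simp
    rw [this, one_mul]
  · rw [if_neg h]

lemma aux_im_zero {n : ℕ} {G : (Fin n → ℝ) → ℝ} {Φ : (Fin n → ℂ) → ℂ} {U : Set (Fin n → ℂ)}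
    (hUopen : IsOpen U) (hΦ : DifferentiableOn ℂ Φ U)
    (heq : ∀ z ∈ U, (G (fun j => ‖z j‖ ^ 2) : ℂ) = Φ z + starRingEnd ℂ (Φ z))
    {z : Fin n → ℂ} (hz : z ∈ U) (j : Fin n) :
    (z j * fderiv ℂ Φ z (Pi.single j 1)).im = 0 := by
  set c : ℝ → (Fin n → ℂ) := fun t => Function.update z j (Complex.exp (t * Complex.I) * z j)
    with hc
  have hc0 : c 0 = z := aux_curve0 j z
  have hmem : ∀ᶠ t : ℝ in nhds 0, c t ∈ U := by
    have hcont := (aux_curve_deriv j z).continuousAt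
    have h := hUopen.mem_nhds hz
    rw [← hc0] at h
    exact hcont.eventually_mem h
  set D : ℂ := (Complex.I * z j) * fderiv ℂ Φ z (Pi.single j 1) with hD
  have h1 : HasDerivAt (fun t : ℝ => Φ (c t) + starRingEnd ℂ (Φ (c t))) (D + starRingEnd ℂ D) 0 := by
    have hΦc := aux_phi_deriv hUopen hΦ hz j
    have hconj : HasDerivAt (fun t : ℝ => starRingEnd ℂ (Φ (c t))) (starRingEnd ℂ D) 0 := by
      have h2 := (Complex.conjCLE.toContinuousLinearMap.hasFDerivAt
        (x := Φ (c 0))).comp_hasDerivAt 0 hΦc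
      simpa only [Function.comp_def, ContinuousLinearEquiv.coe_coe, Complex.conjCLE_apply]
        using h2
    exact hΦc.add hconj
  have hev : (fun t : ℝ => Φ (c t) + starRingEnd ℂ (Φ (c t))) =ᶠ[nhds (0:ℝ)]
      fun _ => ((G (fun k => ‖z k‖ ^ 2) : ℝ) : ℂ) := by
    filter_upwards [hmem] with t ht
    have h' := heq _ ht
    have hmod : (fun k => ‖c t k‖ ^ 2) = fun k => ‖z k‖ ^ 2 := aux_moduli j z t
    rw [hmod] at h'
    exact h'.symm
  have h0 : HasDerivAt (fun t : ℝ => Φ (c t) + starRingEnd ℂ (Φ (c t))) 0 0 :=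
    (hasDerivAt_const (0:ℝ) _).congr_of_eventuallyEq hev
  have hD0 : D + starRingEnd ℂ D = 0 := h1.unique h0
  have hre : D.re = 0 := by
    have := congrArg Complex.re hD0
    simp only [Complex.add_re, Complex.conj_re, Complex.zero_re] at this
    linarith
  have : D.re = -(z j * fderiv ℂ Φ z (Pi.single j 1)).im := by
    rw [hD, mul_assoc]
    simp [Complex.mul_re]
  rw [this] at hre
  linarith

lemma aux_g_locconst {n : ℕ} {G : (Fin n → ℝ) → ℝ} {Φ : (Fin n → ℂ) → ℂ} {U : Set (Fin n → ℂ)}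
    (hUopen : IsOpen U) (hΦ : DifferentiableOn ℂ Φ U)
    (heq : ∀ z ∈ U, (G (fun j => ‖z j‖ ^ 2) : ℂ) = Φ z + starRingEnd ℂ (Φ z))
    {z : Fin n → ℂ} (hz : z ∈ U) (j : Fin n) :
    ∀ᶠ w in nhds z, w j * fderiv ℂ Φ w (Pi.single j 1) = z j * fderiv ℂ Φ z (Pi.single j 1) := by
  -- continuity of the rotation in both variables
  have hcontρ : Continuous (fun p : ℝ × (Fin n → ℂ) =>
      Function.update p.2 j (Complex.exp (p.1 * Complex.I) * p.2 j)) := by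
    apply continuous_pi
    intro k
    have hco : (fun p : ℝ × (Fin n → ℂ) =>
        Function.update p.2 j (Complex.exp (p.1 * Complex.I) * p.2 j) k)
        = fun p : ℝ × (Fin n → ℂ) =>
          if k = j then Complex.exp (p.1 * Complex.I) * p.2 j else p.2 k := by
      funext p; rw [Function.update_apply]
    rw [hco]
    by_cases h : k = j
    · simp only [if_pos h]
      fun_prop
    · simp only [if_neg h]
      fun_prop
  have hev0 : ∀ᶠ p : ℝ × (Fin n → ℂ) in nhds ((0:ℝ), z),
      Function.update p.2 j (Complex.exp (p.1 * Complex.I) * p.2 j) ∈ U := by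
    apply hcontρ.continuousAt.eventually_mem
    simpa using hUopen.mem_nhds hz
  rw [nhds_prod_eq, Filter.eventually_prod_iff] at hev0
  obtain ⟨pa, hpa, pb, hpb, himp⟩ := hev0
  obtain ⟨ε₁, hε₁, h₁⟩ := Metric.eventually_nhds_iff.1 hpa
  obtain ⟨ε₂, hε₂, h₂⟩ := Metric.eventually_nhds_iff.1 hpb
  obtain ⟨δ, hδ, hδ₁, hδ₂⟩ : ∃ δ : ℝ, 0 < δ ∧ δ ≤ ε₁ ∧ δ ≤ ε₂ :=
    ⟨min ε₁ ε₂, lt_min hε₁ hε₂, min_le_left _ _, min_le_right _ _⟩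
  have hprod : ∀ t ∈ ball (0:ℝ) δ, ∀ w ∈ ball z δ,
      Function.update w j (Complex.exp ((t:ℂ) * Complex.I) * w j) ∈ U := by
    intro t ht w hw
    exact himp (h₁ (lt_of_lt_of_le (mem_ball.1 ht) hδ₁)) (h₂ (lt_of_lt_of_le (mem_ball.1 hw) hδ₂))
  have hBU : ball z δ ⊆ U := by
    intro w hw
    have := hprod 0 (mem_ball_self hδ) w hw
    rwa [aux_curve0] at this
  -- for each small t, the function ψ_t is constant on the ball
  have hψconst : ∀ t ∈ ball (0:ℝ) δ, ∀ w ∈ ball z δ,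
      Φ (Function.update w j (Complex.exp ((t:ℂ) * Complex.I) * w j)) - Φ w
        = Φ (Function.update z j (Complex.exp ((t:ℂ) * Complex.I) * z j)) - Φ z := by
    intro t ht
    set ψ : (Fin n → ℂ) → ℂ := fun w =>
      Φ (Function.update w j (Complex.exp ((t:ℂ) * Complex.I) * w j)) - Φ w with hψ
    have hψdiff : ∀ w ∈ ball z δ, DifferentiableAt ℂ ψ w := by
      intro w hw
      have hupd : DifferentiableAt ℂ
          (fun w : Fin n → ℂ => Function.update w j (Complex.exp ((t:ℂ) * Complex.I) * w j)) w := by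
        rw [differentiableAt_pi]
        intro k
        have hco : (fun w : Fin n → ℂ =>
            Function.update w j (Complex.exp ((t:ℂ) * Complex.I) * w j) k)
            = fun w : Fin n → ℂ =>
              if k = j then Complex.exp ((t:ℂ) * Complex.I) * w j else w k := by
          funext w; rw [Function.update_apply]
        rw [hco]
        by_cases h : k = j
        · simp only [if_pos h]
          exact (differentiableAt_pi.1 differentiableAt_id j).const_mul _
        · simp only [if_neg h]
          exact differentiableAt_pi.1 differentiableAt_id k
      have h1 : DifferentiableAt ℂ Φ
          (Function.update w j (Complex.exp ((t:ℂ) * Complex.I) * w j)) :=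
        hΦ.differentiableAt (hUopen.mem_nhds (hprod t ht w hw))
      have h2 : DifferentiableAt ℂ Φ w := hΦ.differentiableAt (hUopen.mem_nhds (hBU hw))
      exact (h1.comp w hupd).sub h2
    have hψre : ∀ w ∈ ball z δ, (ψ w).re = 0 := by
      intro w hw
      have h1 := heq _ (hprod t ht w hw)
      have h2 := heq _ (hBU hw)
      have hmod : (fun k => ‖Function.update w j (Complex.exp ((t:ℂ) * Complex.I) * w j) k‖ ^ 2)
          = fun k => ‖w k‖ ^ 2 := aux_moduli j w t
      rw [hmod] at h1
      have h3 := h1.symm.trans h2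
      have h4 := congrArg Complex.re h3
      simp only [Complex.add_re, Complex.conj_re] at h4
      have : (ψ w).re = (Φ (Function.update w j (Complex.exp ((t:ℂ) * Complex.I) * w j))).re
          - (Φ w).re := by rw [hψ]; simp [Complex.sub_re]
      rw [this]
      linarith
    have hψ0 := aux_deriv_zero_of_re_const isOpen_ball 0 hψdiff hψre
    intro w hw
    exact aux_const_of_deriv_zero isOpen_ball (convex_ball z δ).isPreconnected hψ0 hw
      (mem_ball_self hδ)
  -- conclude via uniqueness of derivatives in t
  filter_upwards [ball_mem_nhds z hδ] with w hw
  have hev2 : (fun t : ℝ => Φ (Function.update w j (Complex.exp ((t:ℂ) * Complex.I) * w j)) - Φ w)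
      =ᶠ[nhds (0:ℝ)]
      (fun t : ℝ => Φ (Function.update z j (Complex.exp ((t:ℂ) * Complex.I) * z j)) - Φ z) := by
    filter_upwards [ball_mem_nhds (0:ℝ) hδ] with t ht
    exact hψconst t ht w hw
  have hd1 : HasDerivAt
      (fun t : ℝ => Φ (Function.update w j (Complex.exp ((t:ℂ) * Complex.I) * w j)) - Φ w)
      (Complex.I * w j * fderiv ℂ Φ w (Pi.single j 1)) 0 :=
    (aux_phi_deriv hUopen hΦ (hBU hw) j).sub_const (Φ w)
  have hd2 : HasDerivAt
      (fun t : ℝ => Φ (Function.update z j (Complex.exp ((t:ℂ) * Complex.I) * z j)) - Φ z)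
      (Complex.I * z j * fderiv ℂ Φ z (Pi.single j 1)) 0 :=
    (aux_phi_deriv hUopen hΦ hz j).sub_const (Φ z)
  have hd1' := hd2.congr_of_eventuallyEq hev2
  have hIeq := hd1.unique hd1'
  rw [mul_assoc, mul_assoc] at hIeq
  exact mul_left_cancel₀ Complex.I_ne_zero hIeq

/-- Lemma `lemradial` (Statement 0): if the real part of a holomorphic function `Φ` on an
open connected set `U ⊆ ℂⁿ` (whose points have all coordinates nonzero) depends only on the
moduli `xⱼ = |zⱼ|²` through a smooth function `G` on `(0,∞)ⁿ`, then
`G(x) = ∑ cⱼ log xⱼ + d` there. -/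
theorem radial_real_part_of_holomorphic
    (n : ℕ) (G : (Fin n → ℝ) → ℝ) (Φ : (Fin n → ℂ) → ℂ) (U : Set (Fin n → ℂ))
    (hUopen : IsOpen U) (hUconn : IsPreconnected U) (hUne : U.Nonempty)
    (hUz : ∀ z ∈ U, ∀ j, z j ≠ 0)
    (hG : ContDiffOn ℝ (⊤ : ℕ∞) G {x : Fin n → ℝ | ∀ j, 0 < x j})
    (hΦ : DifferentiableOn ℂ Φ U)
    (heq : ∀ z ∈ U, (G (fun j => ‖z j‖ ^ 2) : ℂ) = Φ z + starRingEnd ℂ (Φ z)) :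
    ∃ (c : Fin n → ℝ) (d : ℝ), ∀ z ∈ U,
      G (fun j => ‖z j‖ ^ 2) = (∑ j, c j * Real.log (‖z j‖ ^ 2)) + d := by
  obtain ⟨z₀, hz₀⟩ := hUne
  set c : Fin n → ℝ := fun j => (z₀ j * fderiv ℂ Φ z₀ (Pi.single j 1)).re with hcdef
  have hgc : ∀ j, ∀ z ∈ U, z j * fderiv ℂ Φ z (Pi.single j 1) = (c j : ℂ) := by
    intro j z hz
    have hconst : z j * fderiv ℂ Φ z (Pi.single j 1)
        = z₀ j * fderiv ℂ Φ z₀ (Pi.single j 1) :=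
      aux_locally_const_eq hUconn
        (f := fun w => w j * fderiv ℂ Φ w (Pi.single j 1))
        (fun w hw => aux_g_locconst hUopen hΦ heq hw j) hz hz₀
    rw [hconst]
    apply Complex.ext
    · simp [hcdef]
    · simp only [Complex.ofReal_im]
      exact aux_im_zero hUopen hΦ heq hz₀ j
  have hre : ∀ z ∈ U, G (fun j => ‖z j‖ ^ 2) = 2 * (Φ z).re := by
    intro z hz
    have h := congrArg Complex.re (heq z hz)
    simp only [Complex.ofReal_re, Complex.add_re, Complex.conj_re] at h
    linarith
  -- the function u has zero derivative on U
  have hder : ∀ z ∈ U, HasFDerivAt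
      (fun w => 2 * (Φ w).re - ∑ j, c j * Real.log (‖w j‖ ^ 2))
      (0 : (Fin n → ℂ) →L[ℝ] ℝ) z := by
    intro z hz
    have hΦz : HasFDerivAt Φ (fderiv ℂ Φ z) z :=
      (hΦ.differentiableAt (hUopen.mem_nhds hz)).hasFDerivAt
    set Dz := fderiv ℂ Φ z with hDz
    set A : (Fin n → ℂ) →L[ℝ] ℝ := Complex.reCLM.comp (Dz.restrictScalars ℝ) with hA
    have h2 : HasFDerivAt (fun w => 2 * (Φ w).re) ((2:ℝ) • A) z :=
      (Complex.reCLM.hasFDerivAt.comp z (hΦz.restrictScalars ℝ)).const_mul 2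
    set pj : Fin n → (Fin n → ℂ) →L[ℝ] ℂ := fun j =>
      (ContinuousLinearMap.proj (R := ℂ) (φ := fun _ : Fin n => ℂ) j).restrictScalars ℝ
      with hpj
    set rj : Fin n → (Fin n → ℂ) →L[ℝ] ℝ := fun j => Complex.reCLM.comp (pj j) with hrj
    set ij : Fin n → (Fin n → ℂ) →L[ℝ] ℝ := fun j => Complex.imCLM.comp (pj j) with hij
    set Bq : Fin n → (Fin n → ℂ) →L[ℝ] ℝ := fun j =>
      (z j).re • rj j + (z j).re • rj j + ((z j).im • ij j + (z j).im • ij j) with hBq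
    have hq : ∀ j, HasFDerivAt (fun w : Fin n → ℂ => ‖w j‖ ^ 2) (Bq j) z := by
      intro j
      have h0 : HasFDerivAt (fun w : Fin n → ℂ => rj j w * rj j w + ij j w * ij j w)
          (Bq j) z :=
        ((rj j).hasFDerivAt.mul (rj j).hasFDerivAt).add
          ((ij j).hasFDerivAt.mul (ij j).hasFDerivAt)
      have hnorm : (fun w : Fin n → ℂ => ‖w j‖ ^ 2)
          = fun w : Fin n → ℂ => rj j w * rj j w + ij j w * ij j w := by
        funext w
        simp only [hrj, hij, hpj, ContinuousLinearMap.coe_comp', Function.comp_apply,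
          ContinuousLinearMap.coe_restrictScalars', ContinuousLinearMap.proj_apply,
          Complex.reCLM_apply, Complex.imCLM_apply]
        rw [Complex.sq_norm, Complex.normSq_apply]
      rw [hnorm]
      exact h0
    have hzj : ∀ j, ‖z j‖ ^ 2 ≠ 0 := fun j =>
      pow_ne_zero 2 (norm_ne_zero_iff.2 (hUz z hz j))
    have hlog : ∀ j, HasFDerivAt (fun w : Fin n → ℂ => Real.log (‖w j‖ ^ 2))
        ((‖z j‖ ^ 2)⁻¹ • Bq j) z := fun j =>
      by have := (Real.hasDerivAt_log (hzj j)).comp_hasFDerivAt z (hq j); exact this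
    have hsum : HasFDerivAt (fun w : Fin n → ℂ => ∑ j, c j * Real.log (‖w j‖ ^ 2))
        (∑ j, c j • ((‖z j‖ ^ 2)⁻¹ • Bq j)) z :=
      HasFDerivAt.fun_sum fun j _ => (hlog j).const_mul (c j)
    have htot := h2.sub hsum
    have hzero : (2:ℝ) • A - ∑ j, c j • ((‖z j‖ ^ 2)⁻¹ • Bq j) = 0 := by
      ext v
      have hDv : Dz v = ∑ j, v j * fderiv ℂ Φ z (Pi.single j 1) := by
        conv_lhs => rw [← Finset.univ_sum_single v, map_sum]
        exact Finset.sum_congr rfl fun j _ => by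
          rw [aux_single_smul j (v j), map_smul, smul_eq_mul]
      have hterm : ∀ j, v j * fderiv ℂ Φ z (Pi.single j 1) = (c j : ℂ) * (v j / z j) := by
        intro j
        have h := hgc j z hz
        have hzj' : z j ≠ 0 := hUz z hz j
        field_simp
        rw [← h]
        ring
      have hDvre : (Dz v).re = ∑ j, c j * ((v j).re * (z j).re / Complex.normSq (z j)
          + (v j).im * (z j).im / Complex.normSq (z j)) := by
        rw [hDv, Complex.re_sum]
        exact Finset.sum_congr rfl fun j _ => by
          rw [hterm j, Complex.re_ofReal_mul, Complex.div_re]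
      simp only [ContinuousLinearMap.sub_apply, ContinuousLinearMap.smul_apply,
        ContinuousLinearMap.coe_sum', Finset.sum_apply, ContinuousLinearMap.add_apply,
        ContinuousLinearMap.zero_apply, hA, ContinuousLinearMap.coe_comp',
        Function.comp_apply, ContinuousLinearMap.coe_restrictScalars',
        Complex.reCLM_apply, hBq, hrj, hij, hpj, ContinuousLinearMap.proj_apply,
        Complex.imCLM_apply, smul_eq_mul]
      rw [hDvre]
      rw [Finset.mul_sum, ← Finset.sum_sub_distrib]
      apply Finset.sum_eq_zero
      intro j _
      have hq0 : Complex.normSq (z j) ≠ 0 := by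
        rw [Complex.normSq_eq_norm_sq]
        exact hzj j
      have hq1 : ‖z j‖ ^ 2 = Complex.normSq (z j) := by
        rw [Complex.sq_norm]
      rw [hq1]
      field_simp
      ring
    rw [hzero] at htot
    exact htot
  refine ⟨c, 2 * (Φ z₀).re - ∑ j, c j * Real.log (‖z₀ j‖ ^ 2), fun z hz => ?_⟩
  have hconst : (2 * (Φ z).re - ∑ j, c j * Real.log (‖z j‖ ^ 2))
      = 2 * (Φ z₀).re - ∑ j, c j * Real.log (‖z₀ j‖ ^ 2) :=
    aux_const_of_deriv_zero hUopen hUconn hder hz hz₀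
  rw [hre z hz]
  linarith [hconst]
end

section
/- Let n ≥ 2, μ ≠ 0, λ ∈ ℝ, and set ν = n!(μ−λ)/μ^{n+1}. Then the function ψ(y) = ν e^{μy}/y^{n−1} + (λ/μ) y + ((λ−μ)/μ^{n+1}) Σ_{j=0}^{n−1} (n!/j!) μ^j y^{j+1−n}, extended to y = 0, has the power series expansion ψ(y) = y + Σ_{k=1}^{∞} (ν μ^{n+k}/(n+k)!) y^{k+1} near y = 0; in particular ψ(0) = 0 and ψ'(0) = 1. -/
/-!
Split `e^{μy} = ∑_{j<n} (μy)^j/j! + (μy)^n/n! + ∑_{m>n} (μy)^m/m!`. The value of `ν` is exactly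
what makes `ν ∑_{j<n} (μy)^j/j! / y^{n-1}` cancel the finite correction sum term by term, and
turns the `m = n` term into `(1 - λ/μ) y`, which together with `(λ/μ) y` gives `y`; the tail
divided by `y^{n-1}` is the stated series. That series is `O(y²)` at `0`, whence `Ψ'(0) = 1`.
-/

open scoped BigOperators Nat

open Asymptotics Topology

section PowerSeriesAtZero

variable {𝕜 : Type*} [NontriviallyNormedField 𝕜] {a : ℕ → 𝕜}

theorem isBigO_tsum_mul_pow_add_two (ha : Summable fun k => ‖a k‖) :
    (fun y : 𝕜 => ∑' k, a k * y ^ (k + 2)) =O[𝓝 0] fun y => y ^ 2 := by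
  refine IsBigO.of_bound (∑' k, ‖a k‖) ?_
  filter_upwards [Metric.closedBall_mem_nhds (0 : 𝕜) one_pos] with y hy
  rw [mem_closedBall_zero_iff] at hy
  have hterm (k : ℕ) : ‖a k * y ^ (k + 2)‖ ≤ ‖a k‖ * ‖y ^ 2‖ := by
    rw [norm_mul, norm_pow, norm_pow]
    exact mul_le_mul_of_nonneg_left (pow_le_pow_of_le_one (norm_nonneg y) hy (by omega))
      (norm_nonneg _)
  exact tsum_of_norm_bounded (ha.hasSum.mul_right _) hterm

theorem hasDerivAt_tsum_mul_pow_add_two (ha : Summable fun k => ‖a k‖) :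
    HasDerivAt (fun y : 𝕜 => ∑' k, a k * y ^ (k + 2)) 0 0 := by
  rw [hasDerivAt_iff_isLittleO_nhds_zero]
  simpa using (isBigO_tsum_mul_pow_add_two ha).trans_isLittleO (isLittleO_pow_id one_lt_two)

end PowerSeriesAtZero

theorem Real.exp_eq_sum_range_add_tsum (x : ℝ) (n : ℕ) :
    Real.exp x
      = ∑ j ∈ Finset.range (n + 1), x ^ j / j ! + ∑' k, x ^ (n + k + 1) / (n + k + 1)! := by
  rw [Real.exp_eq_exp_ℝ, ← (NormedSpace.expSeries_div_hasSum_exp x).tsum_eq,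
    ← (Real.summable_pow_div_factorial x).sum_add_tsum_nat_add (n + 1)]
  simp only [add_comm _ (n + 1), add_right_comm n 1]

theorem summable_norm_mul_pow_div_factorial (ν μ : ℝ) (n : ℕ) :
    Summable fun k => ‖ν * μ ^ (n + k + 1) / ((n + k + 1)! : ℝ)‖ := by
  have h := ((summable_nat_add_iff (n + 1)).mpr (Real.summable_pow_div_factorial |μ|)).mul_left |ν|
  refine h.congr fun k => ?_
  rw [Real.norm_eq_abs, abs_div, abs_mul, abs_pow, Nat.abs_cast, mul_div_assoc,
    show k + (n + 1) = n + k + 1 by ring]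

theorem pow_div_pow_sub_one_eq_zpow {K : Type*} [Field K] {y : K} (hy : y ≠ 0) {n : ℕ}
    (hn : 1 ≤ n) (m : ℕ) : y ^ m / y ^ (n - 1) = y ^ ((m : ℤ) + 1 - n) := by
  rw [← zpow_natCast, ← zpow_natCast, ← zpow_sub₀ hy, Nat.cast_sub hn]
  ring_nf

section SolitonProfile

variable {n : ℕ} {μ lam y : ℝ}

theorem exp_head_div_pow_add_correction_eq_zero (hy : y ≠ 0) (hn : 1 ≤ n) :
    n ! * (μ - lam) / μ ^ (n + 1) * (∑ j ∈ Finset.range n, (μ * y) ^ j / j !) / y ^ (n - 1)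
      + (lam - μ) / μ ^ (n + 1)
        * ∑ j ∈ Finset.range n, ((n ! : ℝ) / j !) * μ ^ j * y ^ ((j : ℤ) + 1 - n) = 0 := by
  simp only [← pow_div_pow_sub_one_eq_zpow hy hn, Finset.mul_sum, Finset.sum_div,
    ← Finset.sum_add_distrib]
  refine Finset.sum_eq_zero fun j _ => ?_
  rw [mul_pow]
  ring

theorem exp_nth_term_div_pow (hy : y ≠ 0) (hn : 1 ≤ n) (hμ : μ ≠ 0) :
    n ! * (μ - lam) / μ ^ (n + 1) * ((μ * y) ^ n / n !) / y ^ (n - 1) = (1 - lam / μ) * y := by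
  have hpow : (μ * y) ^ n / y ^ (n - 1) = μ ^ n * y := by
    rw [mul_pow, mul_div_assoc, pow_div_pow_sub_one_eq_zpow hy hn, add_sub_cancel_left, zpow_one]
  calc n ! * (μ - lam) / μ ^ (n + 1) * ((μ * y) ^ n / n !) / y ^ (n - 1)
      = n ! * (μ - lam) / μ ^ (n + 1) / n ! * ((μ * y) ^ n / y ^ (n - 1)) := by ring
    _ = (1 - lam / μ) * y := by
      rw [hpow]
      field_simp
      ring

theorem tsum_exp_tail_div_pow (hy : y ≠ 0) (hn : 1 ≤ n) (ν : ℝ) :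
    ν * (∑' k, (μ * y) ^ (n + k + 1) / (n + k + 1)!) / y ^ (n - 1)
      = ∑' k, (ν * μ ^ (n + k + 1) / (n + k + 1)!) * y ^ (k + 2) := by
  rw [← tsum_mul_left, ← tsum_div_const]
  refine tsum_congr fun k => ?_
  have hexp : y ^ (n + k + 1) / y ^ (n - 1) = y ^ (k + 2) := by
    rw [pow_div_pow_sub_one_eq_zpow hy hn,
      show ((n + k + 1 : ℕ) : ℤ) + 1 - n = (k + 2 : ℕ) by push_cast; ring, zpow_natCast]
  rw [← hexp, mul_pow]
  ring

end SolitonProfile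

/-- for `n ≥ 2`, `μ ≠ 0` and `ν = n!(μ−λ)/μ^{n+1}`, the soliton profile
`ψ(y) = ν e^{μy}/y^{n−1} + (λ/μ)y + ((λ−μ)/μ^{n+1}) ∑_{j=0}^{n−1}(n!/j!)μ^j y^{j+1−n}`
coincides, for `y ≠ 0`, with the entire power series
`Ψ(y) = y + ∑_{k≥1} (νμ^{n+k}/(n+k)!) y^{k+1}`; in particular the extension `Ψ`
satisfies `Ψ(0) = 0` and `Ψ'(0) = 1`. -/
theorem soliton_profile_power_series
    (n : ℕ) (hn : 2 ≤ n) (μ lam ν : ℝ) (hμ : μ ≠ 0)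
    (hν : ν = (n ! : ℝ) * (μ - lam) / μ ^ (n + 1))
    (Ψ : ℝ → ℝ)
    (hΨ : Ψ = fun y =>
      y + ∑' k : ℕ, (ν * μ ^ (n + k + 1) / ((n + k + 1)! : ℝ)) * y ^ (k + 2)) :
    (∀ y : ℝ, y ≠ 0 →
        ν * Real.exp (μ * y) / y ^ (n - 1) + (lam / μ) * y
          + ((lam - μ) / μ ^ (n + 1))
              * ∑ j ∈ Finset.range n, ((n ! : ℝ) / (j ! : ℝ)) * μ ^ j * y ^ ((j : ℤ) + 1 - n)
        = Ψ y)
      ∧ Ψ 0 = 0 ∧ HasDerivAt Ψ 1 0 := by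
  have hn1 : 1 ≤ n := by omega
  subst hΨ
  refine ⟨fun y hy => ?_, by simp, ?_⟩
  · dsimp only
    rw [Real.exp_eq_sum_range_add_tsum _ n, Finset.sum_range_succ, ← tsum_exp_tail_div_pow hy hn1]
    subst hν
    linear_combination exp_head_div_pow_add_correction_eq_zero (μ := μ) (lam := lam) hy hn1
      + exp_nth_term_div_pow (lam := lam) hy hn1 hμ
  · simpa using (hasDerivAt_id' (0 : ℝ)).fun_add
      (hasDerivAt_tsum_mul_pow_add_two (summable_norm_mul_pow_div_factorial ν μ n))
end

section
/- Let n ≥ 2, μ > 0, ν > 0 and ψ(y) = y + Σ_{k=1}^{∞} (ν μ^{n+k}/(n+k)!) y^{k+1}. Define F₁(y) = ψ(y) and F_{k+1}(y) = F_k'(y) ψ(y) − k F_k(y). Then for every k ≥ 1, F_k is a power series with nonnegative coefficients and F_k(y) = O(y^k) at 0 (the coefficients of y^j vanish for j < k). -/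
open scoped BigOperators Nat

/-!
Write `ψ = X + ρ` with `X² ∣ ρ` and `ρ` having nonnegative coefficients. Then
`F' ψ - k F = (X F' - k F) + F' ρ`. The Euler-type operator `X F' - k F` multiplies the
coefficient of `y^j` by `j - k`, so it keeps the coefficients of an `F = O(y^k)` nonnegative
and kills the one of `y^k`; the second summand is `O(y^{k-1} · y²)` with nonnegative
coefficients. Induction on `k` finishes the argument.
-/

open PowerSeries

namespace PowerSeries

section CommRing

variable {R : Type*} [CommRing R]

theorem X_pow_sub_one_dvd_derivative {k : ℕ} {f : R⟦X⟧} (hf : X ^ k ∣ f) :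
    X ^ (k - 1) ∣ derivative R f := by
  rw [X_pow_dvd_iff] at hf ⊢
  intro m hm
  rw [coeff_derivative, hf (m + 1) (by omega), zero_mul]

theorem coeff_X_mul_derivative_sub_smul (f : R⟦X⟧) (k : R) (j : ℕ) :
    coeff j (X * derivative R f - k • f) = ((j : R) - k) * coeff j f := by
  rw [map_sub, map_smul, smul_eq_mul]
  cases j with
  | zero => simp
  | succ j => rw [coeff_succ_X_mul, coeff_derivative]; push_cast; ring

theorem X_pow_succ_dvd_X_mul_derivative_sub_smul {k : ℕ} {f : R⟦X⟧} (hfk : X ^ k ∣ f) :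
    X ^ (k + 1) ∣ X * derivative R f - (k : R) • f := by
  rw [X_pow_dvd_iff] at hfk ⊢
  intro m hm
  rw [coeff_X_mul_derivative_sub_smul]
  rcases Nat.lt_succ_iff_lt_or_eq.mp hm with hm | rfl
  · rw [hfk m hm, mul_zero]
  · rw [sub_self, zero_mul]

end CommRing

section OrderedCommRing

variable {R : Type*} [CommRing R] [PartialOrder R] [IsOrderedRing R]

theorem coeff_mul_nonneg {f g : R⟦X⟧} (hf : ∀ j, 0 ≤ coeff j f) (hg : ∀ j, 0 ≤ coeff j g)
    (j : ℕ) : 0 ≤ coeff j (f * g) := by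
  rw [coeff_mul]
  exact Finset.sum_nonneg fun p _ => mul_nonneg (hf p.1) (hg p.2)

theorem coeff_derivative_nonneg {f : R⟦X⟧} (hf : ∀ j, 0 ≤ coeff j f) (j : ℕ) :
    0 ≤ coeff j (derivative R f) := by
  rw [coeff_derivative]
  exact mul_nonneg (hf _) (add_nonneg (Nat.cast_nonneg _) zero_le_one)

theorem coeff_X_mul_derivative_sub_smul_nonneg {k : ℕ} {f : R⟦X⟧}
    (hf : ∀ j, 0 ≤ coeff j f) (hfk : X ^ k ∣ f) (j : ℕ) :
    0 ≤ coeff j (X * derivative R f - (k : R) • f) := by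
  rw [X_pow_dvd_iff] at hfk
  rw [coeff_X_mul_derivative_sub_smul]
  rcases lt_or_ge j k with hj | hj
  · rw [hfk j hj, mul_zero]
  · exact mul_nonneg (sub_nonneg.mpr (Nat.mono_cast hj)) (hf j)

theorem derivative_mul_sub_smul_nonneg_of_X_pow_dvd {k : ℕ} (hk : 1 ≤ k) {f ρ : R⟦X⟧}
    (hf : ∀ j, 0 ≤ coeff j f) (hfk : X ^ k ∣ f)
    (hρ : ∀ j, 0 ≤ coeff j ρ) (hρ2 : X ^ 2 ∣ ρ) :
    (∀ j, 0 ≤ coeff j (derivative R f * (X + ρ) - (k : R) • f))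
      ∧ X ^ (k + 1) ∣ derivative R f * (X + ρ) - (k : R) • f := by
  have hsplit : derivative R f * (X + ρ) - (k : R) • f
      = (X * derivative R f - (k : R) • f) + derivative R f * ρ := by
    rw [mul_add, mul_comm (derivative R f) X]; abel
  have hdvd : X ^ (k + 1) ∣ derivative R f * ρ := by
    rw [show k + 1 = (k - 1) + 2 by omega, pow_add]
    exact mul_dvd_mul (X_pow_sub_one_dvd_derivative hfk) hρ2
  rw [hsplit]
  refine ⟨fun j => ?_, dvd_add (X_pow_succ_dvd_X_mul_derivative_sub_smul hfk) hdvd⟩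
  rw [map_add]
  exact add_nonneg (coeff_X_mul_derivative_sub_smul_nonneg hf hfk j)
    (coeff_mul_nonneg (coeff_derivative_nonneg hf) hρ j)

end OrderedCommRing

end PowerSeries

theorem calabi_recursion_nonneg_coeffs_general
    (n : ℕ) (μ ν : ℝ) (hμ : 0 < μ) (hν : 0 < ν)
    (ψp : PowerSeries ℝ)
    (hψp : ψp = PowerSeries.mk fun m =>
      if m = 0 then 0 else if m = 1 then 1 else ν * μ ^ (n + m - 1) / ((n + m - 1)! : ℝ))
    (F : ℕ → PowerSeries ℝ)
    (hF1 : F 1 = ψp)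
    (hFrec : ∀ k ≥ 1, F (k + 1) = PowerSeries.derivative ℝ (F k) * ψp - (k : ℝ) • F k) :
    ∀ k ≥ 1, (∀ j, 0 ≤ PowerSeries.coeff j (F k))
      ∧ (∀ j < k, PowerSeries.coeff j (F k) = 0) := by
  set ρ : ℝ⟦X⟧ := X ^ 2 * mk fun m => ν * μ ^ (n + m + 1) / ((n + m + 1)! : ℝ)
  have hρ : ∀ j, 0 ≤ coeff j ρ := by
    intro j
    rw [coeff_X_pow_mul', coeff_mk]
    split_ifs <;> positivity
  have hψ : ψp = X + ρ := by
    ext (_ | _ | m) <;> simp [hψp, ρ, coeff_X, coeff_X_pow_mul', add_assoc]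
  suffices ∀ k ≥ 1, (∀ j, 0 ≤ coeff j (F k)) ∧ X ^ k ∣ F k from
    fun k hk => ⟨(this k hk).1, X_pow_dvd_iff.mp (this k hk).2⟩
  intro k hk
  induction k, hk using Nat.le_induction with
  | base =>
    rw [hF1, hψ, pow_one]
    refine ⟨fun j => ?_, dvd_add dvd_rfl (dvd_mul_of_dvd_left (dvd_pow_self X two_ne_zero) _)⟩
    rw [map_add, coeff_X]
    exact add_nonneg (by split_ifs <;> norm_num) (hρ j)
  | succ k hk ih =>
    rw [hFrec k hk, hψ]
    exact derivative_mul_sub_smul_nonneg_of_X_pow_dvd hk ih.1 ih.2 hρ (dvd_mul_right _ _)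

/-- let `ψ(y) = y + ∑_{k≥1} (νμ^{n+k}/(n+k)!) y^{k+1}` (as a formal power
series, `μ, ν > 0`, `n ≥ 2`) and define `F₁ = ψ`, `F_{k+1} = F_k' ψ − k F_k`. Then each
`F_k` (`k ≥ 1`) has nonnegative coefficients and vanishes to order `k` at `0`. -/
theorem calabi_recursion_nonneg_coeffs
    (n : ℕ) (hn : 2 ≤ n) (μ ν : ℝ) (hμ : 0 < μ) (hν : 0 < ν)
    (ψp : PowerSeries ℝ)
    (hψp : ψp = PowerSeries.mk fun m =>
      if m = 0 then 0 else if m = 1 then 1 else ν * μ ^ (n + m - 1) / ((n + m - 1)! : ℝ))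
    (F : ℕ → PowerSeries ℝ)
    (hF1 : F 1 = ψp)
    (hFrec : ∀ k ≥ 1, F (k + 1) = PowerSeries.derivative ℝ (F k) * ψp - (k : ℝ) • F k) :
    ∀ k ≥ 1, (∀ j, 0 ≤ PowerSeries.coeff j (F k))
      ∧ (∀ j < k, PowerSeries.coeff j (F k) = 0) :=
  calabi_recursion_nonneg_coeffs_general n μ ν hμ hν ψp hψp F hF1 hFrec
end

section
/- Let h be a nonnegative integer and ψ smooth with ψ(h) = 0; let Q_k be defined by Q₁(y) = y, Q_{k+1}(y) = (y−k)Q_k(y) + Q_k'(y)ψ(y). Then for every j ≥ 2, Q_{h+j}'(h) = (ψ'(h) − 1)(ψ'(h) − 2) ⋯ (ψ'(h) − j + 1) · Q_{h+1}'(h). -/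
open scoped BigOperators

/-- for `h ∈ ℕ`, `ψ` smooth with `ψ(h) = 0`, and the projective Calabi
functions `Q₁(y)=y`, `Q_{k+1}=(y−k)Q_k + Q_k'ψ`, one has, for all `j ≥ 2`,
`Q_{h+j}'(h) = (ψ'(h)−1)(ψ'(h)−2)⋯(ψ'(h)−j+1) · Q_{h+1}'(h)`. -/
theorem calabi_projective_derivative_recursion
    (h : ℕ) (ψ : ℝ → ℝ)
    (hψ : ContDiff ℝ (⊤ : ℕ∞) ψ)
    (hψh : ψ (h : ℝ) = 0)
    (Q : ℕ → ℝ → ℝ)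
    (hQ1 : Q 1 = fun x => x)
    (hQrec : ∀ k ≥ 1, Q (k + 1) = fun x => (x - (k : ℝ)) * Q k x + deriv (Q k) x * ψ x) :
    ∀ j ≥ 2, deriv (Q (h + j)) (h : ℝ)
      = (∏ i ∈ Finset.range (j - 1), (deriv ψ (h : ℝ) - ((i : ℝ) + 1)))
          * deriv (Q (h + 1)) (h : ℝ) := by
  -- smoothness of each Q k (k ≥ 1)
  have hψ' : ContDiff ℝ ((⊤ : ℕ∞) : WithTop ℕ∞) ψ := hψ.of_le (by simp)
  have hsmooth : ∀ k, 1 ≤ k → ContDiff ℝ ((⊤ : ℕ∞) : WithTop ℕ∞) (Q k) := by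
    intro k hk
    induction k with
    | zero => omega
    | succ n ih =>
      rcases Nat.eq_or_lt_of_le hk with h1 | h1
      · rw [← h1] at *
        rw [hQ1]; exact contDiff_id
      · have hn : 1 ≤ n := by omega
        have hQn := ih hn
        have hderiv : ContDiff ℝ ((⊤ : ℕ∞) : WithTop ℕ∞) (deriv (Q n)) :=
          (contDiff_infty_iff_deriv.mp hQn).2
        rw [hQrec n hn]
        exact (((contDiff_id.sub contDiff_const).mul hQn).add (hderiv.mul hψ'))
  -- vanishing: Q k (h) = 0 for k ≥ h + 1
  have hvanish : ∀ k, h + 1 ≤ k → Q k (h : ℝ) = 0 := by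
    intro k hk
    induction k with
    | zero => omega
    | succ n ih =>
      rcases Nat.eq_or_lt_of_le hk with h1 | h1
      · -- n + 1 = h + 1 case
        have hn : n = h := by omega
        subst hn
        rcases Nat.eq_zero_or_pos n with h0 | h0
        · subst h0; rw [hQ1]; simp
        · rw [hQrec n h0]
          simp [hψh]
      · have hn1 : 1 ≤ n := by omega
        rw [hQrec n hn1]
        simp only [ih (by omega), hψh]
        ring
  -- step: for k ≥ h+1, deriv (Q (k+1)) h = (ψ'(h) + h - k) * deriv (Q k) h
  have hstep : ∀ k, h + 1 ≤ k →
      deriv (Q (k + 1)) (h : ℝ)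
        = (deriv ψ (h : ℝ) + (h : ℝ) - (k : ℝ)) * deriv (Q k) (h : ℝ) := by
    intro k hk
    have hk1 : 1 ≤ k := by omega
    have hQk := hsmooth k hk1
    have hQk' : ContDiff ℝ ((⊤ : ℕ∞) : WithTop ℕ∞) (deriv (Q k)) := (contDiff_infty_iff_deriv.mp hQk).2
    have d1 : HasDerivAt (Q k) (deriv (Q k) (h : ℝ)) (h : ℝ) :=
      (hQk.differentiable (by simp) (h : ℝ)).hasDerivAt
    have d2 : HasDerivAt (deriv (Q k)) (deriv (deriv (Q k)) (h : ℝ)) (h : ℝ) :=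
      (hQk'.differentiable (by simp) (h : ℝ)).hasDerivAt
    have dψ : HasDerivAt ψ (deriv ψ (h : ℝ)) (h : ℝ) :=
      (hψ.differentiable (by simp) (h : ℝ)).hasDerivAt
    have dx : HasDerivAt (fun x : ℝ => x - (k : ℝ)) 1 (h : ℝ) :=
      (hasDerivAt_id _).sub_const _
    have dall : HasDerivAt (fun x : ℝ => (x - (k : ℝ)) * Q k x + deriv (Q k) x * ψ x)
        ((1 * Q k (h : ℝ) + ((h : ℝ) - (k : ℝ)) * deriv (Q k) (h : ℝ))
          + (deriv (deriv (Q k)) (h : ℝ) * ψ (h : ℝ)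
            + deriv (Q k) (h : ℝ) * deriv ψ (h : ℝ))) (h : ℝ) :=
      (dx.mul d1).add (d2.mul dψ)
    rw [hQrec k hk1, dall.deriv, hvanish k hk, hψh]
    ring
  -- main induction
  intro j hj
  induction j with
  | zero => omega
  | succ n ih =>
    rcases Nat.eq_or_lt_of_le hj with h1 | h1
    · -- n + 1 = 2
      have hn : n = 1 := by omega
      subst hn
      have := hstep (h + 1) (le_refl _)
      rw [show (2:ℕ) - 1 = 1 from rfl]
      simp only [Finset.range_one, Finset.prod_singleton, Nat.cast_zero]
      rw [show h + 2 = (h + 1) + 1 by ring, this]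
      push_cast
      ring
    · have hn2 : 2 ≤ n := by omega
      have ihn := ih hn2
      have := hstep (h + n) (by omega)
      rw [show h + (n + 1) = (h + n) + 1 from rfl, this, ihn]
      have hr : n + 1 - 1 = (n - 1) + 1 := by omega
      rw [hr, Finset.prod_range_succ]
      have : ((n - 1 : ℕ) : ℝ) = (n : ℝ) - 1 := by
        have : 1 ≤ n := by omega
        push_cast [this]; ring
      rw [this]
      push_cast
      ring
end

section
/- Let h be a nonnegative integer, ψ smooth with ψ(h) = 0, and Q_k as above (Q₁(y)=y, Q_{k+1}=(y−k)Q_k + Q_k'ψ). Then Q_{h+1}'(h) = (h + ψ'(h))(h − 1 + ψ'(h)) ⋯ (1 + ψ'(h)). -/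
open scoped BigOperators

/-- for `h ∈ ℕ`, `ψ` smooth with `ψ(h) = 0`, and the projective Calabi
functions `Q₁(y)=y`, `Q_{k+1}=(y−k)Q_k + Q_k'ψ`, one has
`Q_{h+1}'(h) = (h + ψ'(h))(h − 1 + ψ'(h)) ⋯ (1 + ψ'(h))`. -/
theorem calabi_projective_first_derivative_value
    (h : ℕ) (ψ : ℝ → ℝ)
    (hψ : ContDiff ℝ (⊤ : ℕ∞) ψ)
    (hψh : ψ (h : ℝ) = 0)
    (Q : ℕ → ℝ → ℝ)
    (hQ1 : Q 1 = fun x => x)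
    (hQrec : ∀ k ≥ 1, Q (k + 1) = fun x => (x - (k : ℝ)) * Q k x + deriv (Q k) x * ψ x) :
    deriv (Q (h + 1)) (h : ℝ)
      = ∏ i ∈ Finset.range h, ((h : ℝ) - (i : ℝ) + deriv ψ (h : ℝ)) := by
  set c : ℝ := deriv ψ (h : ℝ) with hc
  have hψ : ContDiff ℝ (⊤ : ℕ∞) ψ := hψ.of_le (by simp)
  -- smoothness of Q k
  have hsmooth : ∀ k, 1 ≤ k → ContDiff ℝ (⊤ : ℕ∞) (Q k) := by
    intro k hk
    induction k, hk using Nat.le_induction with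
    | base => rw [hQ1]; exact contDiff_id
    | succ k hk ih =>
      rw [hQrec k hk]
      have ih' : ContDiff ℝ (⊤ : ℕ∞) (deriv (Q k)) := (contDiff_infty_iff_deriv.mp ih).2
      exact (((contDiff_id.sub contDiff_const).mul ih).add (ih'.mul hψ))
  -- derivative formula at h
  have hder : ∀ k, 1 ≤ k →
      deriv (Q (k + 1)) (h : ℝ)
        = Q k (h : ℝ) + ((h : ℝ) - (k : ℝ) + c) * deriv (Q k) (h : ℝ) := by
    intro k hk
    have hQk := hsmooth k hk
    have hQk' : ContDiff ℝ (⊤ : ℕ∞) (deriv (Q k)) := (contDiff_infty_iff_deriv.mp hQk).2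
    rw [hQrec k hk]
    have d1 : DifferentiableAt ℝ (fun x : ℝ => x - (k : ℝ)) (h : ℝ) :=
      (differentiable_id.sub_const _).differentiableAt
    have d2 : DifferentiableAt ℝ (Q k) (h : ℝ) :=
      (hQk.differentiable (by norm_num)).differentiableAt
    have d3 : DifferentiableAt ℝ (deriv (Q k)) (h : ℝ) :=
      (hQk'.differentiable (by norm_num)).differentiableAt
    have d4 : DifferentiableAt ℝ ψ (h : ℝ) :=
      (hψ.differentiable (by norm_num)).differentiableAt
    rw [deriv_fun_add (d1.fun_mul d2) (d3.fun_mul d4), deriv_fun_mul d1 d2, deriv_fun_mul d3 d4]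
    have : deriv (fun x : ℝ => x - (k : ℝ)) (h : ℝ) = 1 := by
      simp [deriv_sub_const]
    rw [this, hψh]
    ring
  -- key invariant
  have key : ∀ j, 1 ≤ j →
      Q j (h : ℝ) + c * deriv (Q j) (h : ℝ)
        = ∏ i ∈ Finset.range j, ((h : ℝ) - (i : ℝ) + c) := by
    intro j hj
    induction j, hj using Nat.le_induction with
    | base =>
      rw [hQ1]
      simp [deriv_id']
    | succ k hk ih =>
      have hval : Q (k + 1) (h : ℝ)
          = ((h : ℝ) - (k : ℝ)) * Q k (h : ℝ) + deriv (Q k) (h : ℝ) * ψ (h : ℝ) := by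
        rw [hQrec k hk]
      rw [hval, hder k hk, hψh, Finset.prod_range_succ, ← ih]
      ring
  rcases Nat.eq_zero_or_pos h with h0 | hpos
  · subst h0
    rw [hQ1]
    simp [deriv_id']
  · rw [hder h hpos, sub_self, zero_add]
    exact key h hpos
end
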